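/- arXiv:math/0703045 — 2 statements merged into one kernel-verified Lean document; each statement's English description precedes it below -/
import Mathlib

section
/- For every ā ∈ ^α𝔠 with α < κ̄, the set ⋃{q^k_{ā}(𝔠) : k < ω} is a union-type-definable subgroup of G of bounded index; in fact its index in G is at most 2^{|T|+|α|}. -/
open FirstOrder Cardinal Set

universe u

namespace Paper886

section Basic

variable (L : FirstOrder.Language.{u, u}) (M : Type u) [L.Structure M]

/-- A first-order formula in `n` object variables together with a finite tuple of
parameters from `M`. -/
structure ParamFormula (n : ℕ) : Type u where
  m : ℕ
  toFormula : L.Formula (Fin n ⊕ Fin m)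
  params : Fin m → M

variable {L M}

/-- Realization of a parametrized formula at a tuple. -/
def ParamFormula.Realize {n : ℕ} (f : ParamFormula L M n) (v : Fin n → M) : Prop :=
  f.toFormula.Realize (Sum.elim v f.params)

/-- The parameters of `f` all lie in `B`. -/
def ParamFormula.paramsIn {n : ℕ} (f : ParamFormula L M n) (B : Set M) : Prop :=
  ∀ i, f.params i ∈ B

/-- The set of realizations of a partial 1-type. -/
def realizeSet (p : Set (ParamFormula L M 1)) : Set M :=
  {a | ∀ f ∈ p, f.Realize fun _ => a}

/-- The partial type `p` is over the parameter set `B`. -/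
def IsTypeOver (p : Set (ParamFormula L M 1)) (B : Set M) : Prop :=
  ∀ f ∈ p, f.paramsIn B

variable (L) in
/-- Two tuples realize the same type over a set `A` of parameters. -/
def SameType {α : Type u} (A : Set M) (a b : α → M) : Prop :=
  ∀ (n mp : ℕ) (φ : L.Formula (Fin n ⊕ Fin mp)) (vs : Fin n → α) (ps : Fin mp → M),
    (∀ i, ps i ∈ A) →
      (φ.Realize (Sum.elim (fun i => a (vs i)) ps) ↔ φ.Realize (Sum.elim (fun i => b (vs i)) ps))

variable (L M)

/-- `M` is `κ`-saturated: every finitely satisfiable 1-type over fewer than `κ`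
parameters is realized in `M`. -/
def Saturated (κ : Cardinal.{u}) : Prop :=
  ∀ B : Set M, #B < κ → ∀ p : Set (ParamFormula L M 1), IsTypeOver p B →
    (∀ s : Set (ParamFormula L M 1), s ⊆ p → s.Finite → ∃ a : M, ∀ f ∈ s, f.Realize fun _ => a) →
    ∃ a : M, a ∈ realizeSet p

/-- `Th(M)` is dependent (NIP): no formula has the independence property, where consistency
of a pattern is rendered as finite satisfiability in the (saturated) monster. -/
def IsDependent : Prop :=
  ∀ (nx np : ℕ) (φ : L.Formula (Fin nx ⊕ Fin np)) (a : ℕ → Fin np → M),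
    ¬ ∀ (u : Set ℕ) (s : Finset ℕ), ∃ x : Fin nx → M,
        ∀ i ∈ s, (φ.Realize (Sum.elim x (a i)) ↔ i ∈ u)

variable {L M}

/-- The cardinality `|T|` of the (complete) theory of `M`. -/
noncomputable def theoryCard (L : FirstOrder.Language.{u, u}) : Cardinal.{u} :=
  ℵ₀ ⊔ L.card

variable (L M)

/-- A type-definable group: a partial type `p*` over `A*` together with definitions
(over `A*`) of the group operations making `p*(𝔠)` a group. -/
structure DefGroup : Type u where
  AStar : Set M
  pStar : Set (ParamFormula L M 1)
  pStar_over : IsTypeOver pStar AStar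
  mul : M → M → M
  inv : M → M
  one : M
  mul_definable : ∃ φ : ParamFormula L M 3, φ.paramsIn AStar ∧
    ∀ x y z : M, (φ.Realize ![x, y, z] ↔ mul x y = z)
  inv_definable : ∃ φ : ParamFormula L M 2, φ.paramsIn AStar ∧
    ∀ x y : M, (φ.Realize ![x, y] ↔ inv x = y)
  one_definable : ∃ φ : ParamFormula L M 1, φ.paramsIn AStar ∧
    ∀ x : M, (φ.Realize ![x] ↔ x = one)
  one_mem' : one ∈ realizeSet pStar
  mul_mem' : ∀ x ∈ realizeSet pStar, ∀ y ∈ realizeSet pStar, mul x y ∈ realizeSet pStar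
  inv_mem' : ∀ x ∈ realizeSet pStar, inv x ∈ realizeSet pStar
  mul_assoc' : ∀ x ∈ realizeSet pStar, ∀ y ∈ realizeSet pStar, ∀ z ∈ realizeSet pStar,
    mul (mul x y) z = mul x (mul y z)
  one_mul' : ∀ x ∈ realizeSet pStar, mul one x = x
  mul_one' : ∀ x ∈ realizeSet pStar, mul x one = x
  inv_mul' : ∀ x ∈ realizeSet pStar, mul (inv x) x = one
  mul_inv' : ∀ x ∈ realizeSet pStar, mul x (inv x) = one

variable {L M}

namespace DefGroup

variable (D : DefGroup L M)

/-- The underlying set of the group `G = p*(𝔠)`. -/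
def carrier : Set M := realizeSet D.pStar

/-- `G` is abelian. -/
def IsAbelian : Prop := ∀ x ∈ D.carrier, ∀ y ∈ D.carrier, D.mul x y = D.mul y x

/-- `H` is a subgroup of `G`. -/
def IsSubgroup (H : Set M) : Prop :=
  H ⊆ D.carrier ∧ D.one ∈ H ∧ (∀ x ∈ H, ∀ y ∈ H, D.mul x y ∈ H) ∧ ∀ x ∈ H, D.inv x ∈ H

/-- `(G : H) ≤ c`: at most `c` left cosets of `H` cover `G`. -/
def indexLE (H : Set M) (c : Cardinal.{u}) : Prop :=
  ∃ S : Set M, S ⊆ D.carrier ∧ #S ≤ c ∧ ∀ g ∈ D.carrier, ∃ s ∈ S, D.mul (D.inv s) g ∈ H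

/-- `(G : H) < c`: fewer than `c` left cosets of `H` cover `G`. -/
def indexLT (H : Set M) (c : Cardinal.{u}) : Prop :=
  ∃ S : Set M, S ⊆ D.carrier ∧ #S < c ∧ ∀ g ∈ D.carrier, ∃ s ∈ S, D.mul (D.inv s) g ∈ H

/-- The realization set of the partial type `q^n_Γ`. -/
def qSet (Γ : Set (ParamFormula L M 1)) (n : ℕ) : Set M :=
  {c | ∃ d : Fin n → M × M,
    (∀ ℓ, (d ℓ).1 ∈ D.carrier ∧ (d ℓ).2 ∈ D.carrier) ∧
    (∀ ℓ, ∀ f ∈ Γ, (f.Realize fun _ => (d ℓ).1) ↔ (f.Realize fun _ => (d ℓ).2)) ∧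
    c = (List.ofFn fun ℓ => D.mul (D.inv (d ℓ).1) (d ℓ).2).foldr D.mul D.one}

/-- The realization set of `q^n_{ā}`, i.e. `q^n_{Γ_ā}` where `Γ_ā` consists of all
formulas with parameters in the range of `ā`. -/
def qTupleSet {α : Type u} (a : α → M) (n : ℕ) : Set M :=
  D.qSet {f : ParamFormula L M 1 | f.paramsIn (Set.range a)} n

end DefGroup

end Basic

variable {L : FirstOrder.Language.{u, u}} {M : Type u} [L.Structure M]

variable (L) in
/-- `X` is the union of fewer than `κ` realization sets of types over `B`. -/
def UnionTypeDefOver (X B : Set M) (κ : Cardinal.{u}) : Prop :=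
  ∃ ι : Type u, #ι < κ ∧ ∃ P : ι → Set (ParamFormula L M 1),
    (∀ i, IsTypeOver (P i) B) ∧ X = ⋃ i, realizeSet (P i)

variable (L) in
/-- `X` is union-type-definable (with fewer than `κ` parameters altogether). -/
def UnionTypeDefinable (X : Set M) (κ : Cardinal.{u}) : Prop :=
  ∃ B : Set M, #B < κ ∧ UnionTypeDefOver L X B κ

/-- `G_q = (p* ∪ q)(𝔠)`. -/
def Gq (D : DefGroup L M) (q : Set (ParamFormula L M 1)) : Set M :=
  realizeSet (D.pStar ∪ q)

/-- `R_B`: the family of 1-types `q` over `B` such that `G_q` is a subgroup of `G`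
of index `< κ`. -/
def RB (D : DefGroup L M) (κ : Cardinal.{u}) (B : Set M) : Set (Set (ParamFormula L M 1)) :=
  {q | IsTypeOver q B ∧ D.IsSubgroup (Gq D q) ∧ D.indexLT (Gq D q) κ}

/-- `q_B`, the union of all members of `R_B`. -/
def qB (D : DefGroup L M) (κ : Cardinal.{u}) (B : Set M) : Set (ParamFormula L M 1) :=
  ⋃₀ RB D κ B

/-- `G_B = q_B(𝔠) ∩ G`. -/
def GB (D : DefGroup L M) (κ : Cardinal.{u}) (B : Set M) : Set M :=
  realizeSet (qB D κ B) ∩ D.carrier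

/-- The complete type of `a` over `A` (as the set of all param-formulas over `A`
satisfied by `a`). -/
def typeOf (A : Set M) (a : M) : Set (ParamFormula L M 1) :=
  {f | f.paramsIn A ∧ f.Realize fun _ => a}

/-- `φ(x̄, ȳ₀, …, ȳ_{k-1})` is `k`-independent: for every index set of size `< κ` there is
an array of parameter tuples such that every pattern on `^k ι` is (finitely) satisfiable. -/
def FormulaKIndep (M : Type u) [L.Structure M] (κ : Cardinal.{u}) (k nx : ℕ) (ny : Fin k → ℕ)
    (φ : L.Formula (Fin nx ⊕ ((ℓ : Fin k) × Fin (ny ℓ)))) : Prop :=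
  ∀ ι : Type u, #ι < κ →
    ∃ a : (ℓ : Fin k) → ι → Fin (ny ℓ) → M,
      ∀ (u : Set (Fin k → ι)) (s : Finset (Fin k → ι)),
        ∃ x : Fin nx → M,
          ∀ η ∈ s, ((φ.Realize (Sum.elim x fun p => a p.1 (η p.1) p.2)) ↔ η ∈ u)

/-- `Th(M)` is `k`-independent. -/
def KIndependent (L : FirstOrder.Language.{u, u}) (M : Type u) [L.Structure M] (κ : Cardinal.{u})
    (k : ℕ) : Prop :=
  ∃ (nx : ℕ) (ny : Fin k → ℕ) (φ : L.Formula (Fin nx ⊕ ((ℓ : Fin k) × Fin (ny ℓ)))),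
    FormulaKIndep M κ k nx ny φ

/-- `Th(M)` is `k`-dependent. -/
def KDependent (L : FirstOrder.Language.{u, u}) (M : Type u) [L.Structure M] (κ : Cardinal.{u})
    (k : ℕ) : Prop :=
  ¬ KIndependent L M κ k

/-!
Let `S ⊆ G` be the set of all `g⁻¹ h` with `g, h ∈ G` of the same type over `ā`. Then
`q^k_ā(𝔠) = S^k`, and since `S` is symmetric, `⋃_k S^k` is the subgroup generated by `S`.

Each `q^k_ā(𝔠)` is type-definable over `A* ∪ ā`: `c ∈ q^k_ā(𝔠)` iff a set of formulas in `c` and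
finitely many witnesses (the `d`'s, the `d_{2ℓ}⁻¹`, the factors and the partial products) has a
solution, and by `κ̄`-saturation this happens iff `c` satisfies `∃ w̄ (ψ₁ ∧ … ∧ ψₘ)(c, w̄)` for
any finitely many of these formulas.

If `s, g ∈ G` have the same type over `ā`, then `s⁻¹ g ∈ S`. So one element of `G` for each type
over `ā` realized in `G` gives at most `2^{|T|+|α|}` left coset representatives, and that is less
than `κ̄` because `κ̄` is a strong limit.
-/

open FirstOrder.Language
open scoped Pointwise

/-- `ParamFormula L M n` with the free variables indexed by an arbitrary type `β`. -/
structure PFormula (L : FirstOrder.Language.{u, u}) (M : Type u) (β : Type) : Type u where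
  m : ℕ
  toFormula : L.Formula (β ⊕ Fin m)
  params : Fin m → M

namespace PFormula

variable {β γ : Type}

def Realize (f : PFormula L M β) (v : β → M) : Prop :=
  f.toFormula.Realize (Sum.elim v f.params)

def paramsIn (f : PFormula L M β) (B : Set M) : Prop :=
  ∀ i, f.params i ∈ B

def toParamFormula {n : ℕ} (f : PFormula L M (Fin n)) : ParamFormula L M n :=
  ⟨f.m, f.toFormula, f.params⟩

@[simp]
theorem realize_toParamFormula {n : ℕ} (f : PFormula L M (Fin n)) (v : Fin n → M) :
    f.toParamFormula.Realize v ↔ f.Realize v :=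
  Iff.rfl

omit [L.Structure M] in
theorem paramsIn_toParamFormula {n : ℕ} {f : PFormula L M (Fin n)} {B : Set M}
    (hf : f.paramsIn B) : f.toParamFormula.paramsIn B :=
  hf

def top : PFormula L M β :=
  ⟨0, ⊤, finZeroElim⟩

@[simp]
theorem realize_top (v : β → M) : (top : PFormula L M β).Realize v := by
  simp [Realize, top]

omit [L.Structure M] in
theorem paramsIn_top (B : Set M) : (top : PFormula L M β).paramsIn B :=
  finZeroElim

omit [L.Structure M] in
theorem append_params_mem {f g : PFormula L M β} {B : Set M} (hf : f.paramsIn B)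
    (hg : g.paramsIn B) (i : Fin (f.m + g.m)) : Fin.append f.params g.params i ∈ B :=
  Fin.addCases (fun j => by simpa using hf j) (fun j => by simpa using hg j) i

def castLeft (f g : PFormula L M β) : L.Formula (β ⊕ Fin (f.m + g.m)) :=
  f.toFormula.relabel (Sum.map id (Fin.castAdd g.m))

def castRight (f g : PFormula L M β) : L.Formula (β ⊕ Fin (f.m + g.m)) :=
  g.toFormula.relabel (Sum.map id (Fin.natAdd f.m))

@[simp]
theorem realize_castLeft (f g : PFormula L M β) (v : β → M) :
    (f.castLeft g).Realize (Sum.elim v (Fin.append f.params g.params)) ↔ f.Realize v := by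
  rw [castLeft, Formula.realize_relabel, Realize]
  congr!
  ext (b | i) <;> simp

@[simp]
theorem realize_castRight (f g : PFormula L M β) (v : β → M) :
    (f.castRight g).Realize (Sum.elim v (Fin.append f.params g.params)) ↔ g.Realize v := by
  rw [castRight, Formula.realize_relabel, Realize]
  congr!
  ext (b | i) <;> simp

protected def and (f g : PFormula L M β) : PFormula L M β :=
  ⟨f.m + g.m, f.castLeft g ⊓ f.castRight g, Fin.append f.params g.params⟩

@[simp]
theorem realize_and (f g : PFormula L M β) (v : β → M) :
    (f.and g).Realize v ↔ f.Realize v ∧ g.Realize v := by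
  simp [PFormula.and, Realize]

omit [L.Structure M] in
theorem paramsIn_and {f g : PFormula L M β} {B : Set M} (hf : f.paramsIn B)
    (hg : g.paramsIn B) : (f.and g).paramsIn B :=
  append_params_mem hf hg

protected def iff (f g : PFormula L M β) : PFormula L M β :=
  ⟨f.m + g.m, (f.castLeft g).iff (f.castRight g), Fin.append f.params g.params⟩

@[simp]
theorem realize_iff (f g : PFormula L M β) (v : β → M) :
    (f.iff g).Realize v ↔ (f.Realize v ↔ g.Realize v) := by
  simp [PFormula.iff, Realize]

omit [L.Structure M] in
theorem paramsIn_iff {f g : PFormula L M β} {B : Set M} (hf : f.paramsIn B)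
    (hg : g.paramsIn B) : (f.iff g).paramsIn B :=
  append_params_mem hf hg

def listInf (l : List (PFormula L M β)) : PFormula L M β :=
  l.foldr PFormula.and top

@[simp]
theorem realize_listInf (l : List (PFormula L M β)) (v : β → M) :
    (listInf l).Realize v ↔ ∀ f ∈ l, f.Realize v := by
  induction l with
  | nil => simp [listInf]
  | cons f l ih => simp [listInf, ← ih]

omit [L.Structure M] in
theorem paramsIn_listInf {l : List (PFormula L M β)} {B : Set M}
    (h : ∀ f ∈ l, f.paramsIn B) : (listInf l).paramsIn B := by
  induction l with
  | nil => exact paramsIn_top B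
  | cons f l ih => exact paramsIn_and (h f (by simp)) (ih fun g hg => h g (by simp [hg]))

def subst {j : ℕ} (f : PFormula L M β) (σ : β → γ ⊕ Fin j) (extra : Fin j → M) :
    PFormula L M γ :=
  ⟨f.m + j,
    f.toFormula.relabel (Sum.elim (Sum.map id (Fin.natAdd f.m) ∘ σ) (Sum.inr ∘ Fin.castAdd j)),
    Fin.append f.params extra⟩

@[simp]
theorem realize_subst {j : ℕ} (f : PFormula L M β) (σ : β → γ ⊕ Fin j) (extra : Fin j → M)
    (v : γ → M) : (f.subst σ extra).Realize v ↔ f.Realize (Sum.elim v extra ∘ σ) := by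
  rw [subst, Realize, Formula.realize_relabel, Realize]
  congr!
  ext (b | i)
  · rcases h : σ b with c | i <;> simp [h]
  · simp

omit [L.Structure M] in
theorem paramsIn_subst {j : ℕ} {f : PFormula L M β} {σ : β → γ ⊕ Fin j} {extra : Fin j → M}
    {B : Set M} (hf : f.paramsIn B) (hextra : ∀ i, extra i ∈ B) : (f.subst σ extra).paramsIn B :=
  Fin.addCases (fun i => by simpa [subst] using hf i) (fun i => by simpa [subst] using hextra i)

def map (g : β → γ) (f : PFormula L M β) : PFormula L M γ :=
  f.subst (Sum.inl ∘ g) finZeroElim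

@[simp]
theorem realize_map (g : β → γ) (f : PFormula L M β) (v : γ → M) :
    (f.map g).Realize v ↔ f.Realize (v ∘ g) :=
  realize_subst _ _ _ _

omit [L.Structure M] in
theorem paramsIn_map {g : β → γ} {f : PFormula L M β} {B : Set M} (hf : f.paramsIn B) :
    (f.map g).paramsIn B :=
  paramsIn_subst hf finZeroElim

def substHead (a : M) (f : PFormula L M (Fin 1 ⊕ β)) : PFormula L M β :=
  f.subst (Sum.elim (fun _ => Sum.inr 0) Sum.inl) ![a]

@[simp]
theorem realize_substHead (a : M) (f : PFormula L M (Fin 1 ⊕ β)) (v : β → M) :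
    (f.substHead a).Realize v ↔ f.Realize (Sum.elim (fun _ => a) v) := by
  rw [substHead, realize_subst]
  congr!
  ext (i | b) <;> simp

omit [L.Structure M] in
theorem paramsIn_substHead {a : M} {f : PFormula L M (Fin 1 ⊕ β)} {B : Set M}
    (hf : f.paramsIn B) : (f.substHead a).paramsIn (insert a B) :=
  paramsIn_subst (fun i => mem_insert_of_mem a (hf i)) (fun i => by simp)

noncomputable def exs [Finite γ] (f : PFormula L M (β ⊕ γ)) : PFormula L M β :=
  ⟨f.m,
    (f.toFormula.relabel
      (Sum.elim (Sum.elim (Sum.inl ∘ Sum.inl) Sum.inr) (Sum.inl ∘ Sum.inr))).iExs γ,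
    f.params⟩

@[simp]
theorem realize_exs [Finite γ] (f : PFormula L M (β ⊕ γ)) (v : β → M) :
    (exs f).Realize v ↔ ∃ w : γ → M, f.Realize (Sum.elim v w) := by
  simp only [exs, Realize, Formula.realize_iExs, Formula.realize_relabel]
  refine exists_congr fun w => ?_
  congr!
  ext ((b | c) | i) <;> simp

omit [L.Structure M] in
theorem paramsIn_exs [Finite γ] {f : PFormula L M (β ⊕ γ)} {B : Set M} (hf : f.paramsIn B) :
    (exs f).paramsIn B :=
  hf

def eq (b₁ b₂ : β) : PFormula L M β :=
  ⟨0, (Term.var (Sum.inl b₁)).equal (Term.var (Sum.inl b₂)), finZeroElim⟩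

@[simp]
theorem realize_eq (b₁ b₂ : β) (v : β → M) :
    (eq (L := L) b₁ b₂).Realize v ↔ v b₁ = v b₂ := by
  simp [eq, Realize]

omit [L.Structure M] in
theorem paramsIn_eq (b₁ b₂ : β) (B : Set M) : (eq (L := L) b₁ b₂).paramsIn B :=
  finZeroElim

end PFormula

def ParamFormula.atVars {n : ℕ} {β : Type} (f : ParamFormula L M n) (g : Fin n → β) :
    PFormula L M β :=
  PFormula.map g ⟨f.m, f.toFormula, f.params⟩

@[simp]
theorem ParamFormula.realize_atVars {n : ℕ} {β : Type} (f : ParamFormula L M n)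
    (g : Fin n → β) (v : β → M) : (f.atVars g).Realize v ↔ f.Realize (v ∘ g) :=
  PFormula.realize_map _ _ _

omit [L.Structure M] in
theorem ParamFormula.paramsIn_atVars {n : ℕ} {β : Type} {f : ParamFormula L M n}
    {g : Fin n → β} {B : Set M} (hf : f.paramsIn B) : (f.atVars g).paramsIn B :=
  PFormula.paramsIn_map hf

section Saturation

open PFormula

variable {β γ V : Type}

def IsFinitelySatisfiable (p : Set (PFormula L M β)) : Prop :=
  ∀ l : List (PFormula L M β), (∀ f ∈ l, f ∈ p) → ∃ v, ∀ f ∈ l, f.Realize v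

theorem isFinitelySatisfiable_image {p : Set (PFormula L M β)}
    {F : PFormula L M β → PFormula L M γ}
    (h : ∀ l : List (PFormula L M β), (∀ f ∈ l, f ∈ p) → ∃ w, ∀ f ∈ l, (F f).Realize w) :
    IsFinitelySatisfiable (F '' p) := by
  intro l hl
  obtain ⟨l₀, hl₀, rfl⟩ : ∃ l₀ : List (PFormula L M β), (∀ f ∈ l₀, f ∈ p) ∧ l₀.map F = l := by
    induction l with
    | nil => exact ⟨[], by simp, rfl⟩
    | cons g l ih =>
      obtain ⟨f, hf, rfl⟩ := hl g (by simp)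
      obtain ⟨l₀, hl₀, rfl⟩ := ih fun g hg => hl g (by simp [hg])
      exact ⟨f :: l₀, by simpa [hf] using hl₀, rfl⟩
  simpa using h l₀ hl₀

theorem IsFinitelySatisfiable.map_equiv {p : Set (PFormula L M β)}
    (hp : IsFinitelySatisfiable p) (e : γ ≃ β) : IsFinitelySatisfiable (map e.symm '' p) :=
  isFinitelySatisfiable_image fun l hl => by
    obtain ⟨v, hv⟩ := hp l hl
    exact ⟨v ∘ e, by simpa [Function.comp_assoc] using hv⟩

theorem mk_insert_lt {κ : Cardinal.{u}} (hκ : ℵ₀ < κ) {B : Set M} (hB : #B < κ) (a : M) :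
    #(insert a B : Set M) < κ :=
  mk_insert_le.trans_lt (add_lt_of_lt hκ.le hB (one_lt_aleph0.trans hκ))

variable [Finite V]

/-- The partial type of all `∃ w, ψ₁(x, w) ∧ … ∧ ψₖ(x, w)` with `ψᵢ ∈ Ψ`. -/
noncomputable def exType (Ψ : Set (PFormula L M (Fin 1 ⊕ V))) : Set (ParamFormula L M 1) :=
  {g | ∃ l : List (PFormula L M (Fin 1 ⊕ V)), (∀ f ∈ l, f ∈ Ψ) ∧
    g = (listInf l).exs.toParamFormula}

omit [L.Structure M] in
theorem isTypeOver_exType {Ψ : Set (PFormula L M (Fin 1 ⊕ V))} {B : Set M}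
    (hΨ : ∀ f ∈ Ψ, f.paramsIn B) : IsTypeOver (exType Ψ) B := by
  rintro g ⟨l, hl, rfl⟩
  exact paramsIn_toParamFormula (paramsIn_exs (paramsIn_listInf fun f hf => hΨ f (hl f hf)))

theorem mem_realizeSet_exType {Ψ : Set (PFormula L M (Fin 1 ⊕ V))} {c : M} :
    c ∈ realizeSet (exType Ψ) ↔ ∀ l : List (PFormula L M (Fin 1 ⊕ V)), (∀ f ∈ l, f ∈ Ψ) →
      ∃ w : V → M, ∀ f ∈ l, f.Realize (Sum.elim (fun _ => c) w) := by
  refine ⟨fun hc l hl => ?_, fun h => ?_⟩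
  · simpa using hc _ ⟨l, hl, rfl⟩
  · rintro g ⟨l, hl, rfl⟩
    simpa using h l hl

theorem isFinitelySatisfiable_substHead {Ψ : Set (PFormula L M (Fin 1 ⊕ V))} {c : M}
    (hc : c ∈ realizeSet (exType Ψ)) : IsFinitelySatisfiable (substHead c '' Ψ) :=
  isFinitelySatisfiable_image fun l hl => by simpa using mem_realizeSet_exType.1 hc l hl

theorem exists_realize_of_finite_subset_exType {Ψ : Set (PFormula L M (Fin 1 ⊕ V))}
    (hΨ : IsFinitelySatisfiable Ψ) (s : Set (ParamFormula L M 1)) (hs : s ⊆ exType Ψ)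
    (hfin : s.Finite) : ∃ a : M, ∀ g ∈ s, g.Realize fun _ => a := by
  have hs' : ∀ g ∈ s, ∃ l : List (PFormula L M (Fin 1 ⊕ V)),
      (∀ f ∈ l, f ∈ Ψ) ∧ g = (listInf l).exs.toParamFormula := hs
  choose! ls hls using hs'
  obtain ⟨v, hv⟩ := hΨ (hfin.toFinset.toList.flatMap ls) (by
    simp only [List.mem_flatMap, Finset.mem_toList, Set.Finite.mem_toFinset]
    rintro f ⟨g, hg, hf⟩
    exact (hls g hg).1 f hf)
  have hv' : Sum.elim (fun _ => v (Sum.inl 0)) (v ∘ Sum.inr) = v := by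
    ext x
    rcases x with i | x
    · simp [Fin.fin_one_eq_zero i]
    · simp
  refine ⟨v (Sum.inl 0), fun g hg => ?_⟩
  rw [(hls g hg).2, realize_toParamFormula, realize_exs]
  refine ⟨v ∘ Sum.inr, (realize_listInf _ _).2 fun f hf => hv' ▸ hv f ?_⟩
  simpa using ⟨g, hg, hf⟩

/-- The new variable is realized first, by a realization of the projection of `p` onto it. -/
theorem Saturated.exists_realize_option {κ : Cardinal.{u}} (hsat : Saturated L M κ)
    (hκ : ℵ₀ < κ)
    (ih : ∀ B : Set M, #B < κ → ∀ p : Set (PFormula L M V), (∀ f ∈ p, f.paramsIn B) →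
      IsFinitelySatisfiable p → ∃ v, ∀ f ∈ p, f.Realize v)
    {B : Set M} (hB : #B < κ) {p : Set (PFormula L M (Option V))}
    (hpB : ∀ f ∈ p, f.paramsIn B) (hp : IsFinitelySatisfiable p) :
    ∃ v, ∀ f ∈ p, f.Realize v := by
  let σ : Option V → Fin 1 ⊕ V := fun o => o.elim (Sum.inl 0) Sum.inr
  have hσ (a : M) (w : V → M) : Sum.elim (fun _ => a) w ∘ σ = fun o => o.elim a w := by
    ext (_ | _) <;> rfl
  have hΨB : ∀ f ∈ map σ '' p, f.paramsIn B := by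
    rintro _ ⟨f, hf, rfl⟩
    exact paramsIn_map (hpB f hf)
  have hΨ : IsFinitelySatisfiable (map σ '' p) := isFinitelySatisfiable_image fun l hl => by
    obtain ⟨v, hv⟩ := hp l hl
    refine ⟨Sum.elim (fun _ => v none) (v ∘ some), fun f hf => ?_⟩
    rw [realize_map, hσ]
    convert hv f hf using 2 with o
    cases o <;> rfl
  obtain ⟨a, ha⟩ := hsat B hB _ (isTypeOver_exType hΨB)
    (exists_realize_of_finite_subset_exType hΨ)
  obtain ⟨w, hw⟩ := ih (insert a B) (mk_insert_lt hκ hB a) (substHead a '' (map σ '' p))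
    (by rintro _ ⟨f, hf, rfl⟩; exact paramsIn_substHead (hΨB f hf))
    (isFinitelySatisfiable_substHead ha)
  refine ⟨fun o => o.elim a w, fun f hf => ?_⟩
  simpa [hσ] using hw _ ⟨_, ⟨f, hf, rfl⟩, rfl⟩

theorem Saturated.exists_realize {κ : Cardinal.{u}} (hsat : Saturated L M κ) (hκ : ℵ₀ < κ)
    (V : Type) [Finite V] {B : Set M} (hB : #B < κ) {p : Set (PFormula L M V)}
    (hpB : ∀ f ∈ p, f.paramsIn B) (hp : IsFinitelySatisfiable p) :
    ∃ v, ∀ f ∈ p, f.Realize v := by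
  revert B p
  refine Finite.induction_empty_option (P := fun V => ∀ {B : Set M}, #B < κ →
    ∀ {p : Set (PFormula L M V)}, (∀ f ∈ p, f.paramsIn B) → IsFinitelySatisfiable p →
      ∃ v, ∀ f ∈ p, f.Realize v) ?_ ?_ ?_ V
  · intro V W e ih B hB p hpB hp
    obtain ⟨v, hv⟩ := ih hB (by rintro _ ⟨f, hf, rfl⟩; exact paramsIn_map (hpB f hf))
      (hp.map_equiv e)
    exact ⟨v ∘ e.symm, fun f hf => by simpa using hv _ ⟨f, hf, rfl⟩⟩
  · intro B hB p hpB hp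
    refine ⟨isEmptyElim, fun f hf => ?_⟩
    obtain ⟨v, hv⟩ := hp [f] (by simpa using hf)
    simpa [Subsingleton.elim v isEmptyElim] using hv
  · intro V _ ih B hB p hpB hp
    exact hsat.exists_realize_option hκ (fun B hB p => ih hB) hB hpB hp

theorem Saturated.realizeSet_exType {κ : Cardinal.{u}} (hsat : Saturated L M κ)
    (hκ : ℵ₀ < κ) {B : Set M} (hB : #B < κ) {Ψ : Set (PFormula L M (Fin 1 ⊕ V))}
    (hΨB : ∀ f ∈ Ψ, f.paramsIn B) :
    realizeSet (exType Ψ) =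
      {c | ∃ w : V → M, ∀ f ∈ Ψ, f.Realize (Sum.elim (fun _ => c) w)} := by
  ext c
  refine ⟨fun hc => ?_, fun ⟨w, hw⟩ =>
    mem_realizeSet_exType.2 fun l hl => ⟨w, fun f hf => hw f (hl f hf)⟩⟩
  obtain ⟨w, hw⟩ := hsat.exists_realize hκ V (mk_insert_lt hκ hB c)
    (by rintro _ ⟨f, hf, rfl⟩; exact paramsIn_substHead (hΨB f hf))
    (isFinitelySatisfiable_substHead hc)
  exact ⟨w, fun f hf => by simpa using hw _ ⟨f, hf, rfl⟩⟩

end Saturation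

theorem ParamFormula.exists_formula_of_paramsIn {n : ℕ} {A : Set M} {f : ParamFormula L M n}
    (hf : f.paramsIn A) :
    ∃ φ : L.Formula (Fin n ⊕ A), ∀ v, f.Realize v ↔ φ.Realize (Sum.elim v (↑)) :=
  ⟨f.toFormula.relabel (Sum.map id fun i => ⟨f.params i, hf i⟩), fun v => by
    rw [Formula.realize_relabel, ParamFormula.Realize]
    congr!
    ext (i | i) <;> rfl⟩

theorem mk_formula_le (n : ℕ) (A : Type u) : #(L.Formula (Fin n ⊕ A)) ≤ theoryCard L ⊔ #A := by
  have hθ : ℵ₀ ≤ theoryCard L ⊔ #A := le_sup_of_le_left le_sup_left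
  calc #(L.Formula (Fin n ⊕ A))
      ≤ #(Σ k, L.BoundedFormula (Fin n ⊕ A) k) :=
        mk_le_of_injective (f := fun φ => ⟨0, φ⟩) fun _ _ h => eq_of_heq (Sigma.mk.inj_iff.1 h).2
    _ ≤ max ℵ₀ (lift.{u} #(Fin n ⊕ A) + lift.{u} L.card) := BoundedFormula.card_le
    _ ≤ theoryCard L ⊔ #A := by
      simp only [lift_id, lift_uzero, mk_sum, mk_fin, lift_natCast]
      exact max_le hθ (add_le_of_le hθ (add_le_of_le hθ ((natCast_lt_aleph0 (n := n)).le.trans hθ)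
        le_sup_right) (le_sup_of_le_left le_sup_right))

namespace DefGroup

variable (D : DefGroup L M)

instance : Group D.carrier where
  mul x y := ⟨D.mul x y, D.mul_mem' _ x.2 _ y.2⟩
  one := ⟨D.one, D.one_mem'⟩
  inv x := ⟨D.inv x, D.inv_mem' _ x.2⟩
  mul_assoc x y z := Subtype.ext (D.mul_assoc' _ x.2 _ y.2 _ z.2)
  one_mul x := Subtype.ext (D.one_mul' _ x.2)
  mul_one x := Subtype.ext (D.mul_one' _ x.2)
  inv_mul_cancel x := Subtype.ext (D.inv_mul' _ x.2)

theorem coe_list_prod (l : List D.carrier) :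
    ((l.prod : D.carrier) : M) = (l.map (↑)).foldr D.mul D.one := by
  induction l with
  | nil => rfl
  | cons x l ih => rw [List.prod_cons, List.map_cons, List.foldr_cons, ← ih]; rfl

def typeDiffs (Γ : Set (ParamFormula L M 1)) : Set D.carrier :=
  {x | ∃ g h : D.carrier, (∀ f ∈ Γ, (f.Realize fun _ => (g : M)) ↔ f.Realize fun _ => (h : M)) ∧
    g⁻¹ * h = x}

theorem inv_typeDiffs (Γ : Set (ParamFormula L M 1)) : (D.typeDiffs Γ)⁻¹ = D.typeDiffs Γ := by
  ext x
  simp only [Set.mem_inv, typeDiffs, mem_ofPred_eq]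
  constructor <;> rintro ⟨g, h, hgh, e⟩ <;>
    refine ⟨h, g, fun f hf => (hgh f hf).symm, ?_⟩
  · rw [← inv_inv x, ← e, mul_inv_rev, inv_inv]
  · rw [← e, mul_inv_rev, inv_inv]

theorem qSet_eq_image_pow (Γ : Set (ParamFormula L M 1)) (n : ℕ) :
    D.qSet Γ n = (↑) '' (D.typeDiffs Γ ^ n) := by
  ext c
  simp only [qSet, mem_image, Set.mem_pow, mem_ofPred_eq]
  constructor
  · rintro ⟨d, hd, hΓ, rfl⟩
    refine ⟨_, ⟨fun ℓ => ⟨_, ⟨(d ℓ).1, (hd ℓ).1⟩, ⟨(d ℓ).2, (hd ℓ).2⟩, hΓ ℓ, rfl⟩, rfl⟩, ?_⟩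
    rw [coe_list_prod, List.map_ofFn]
    rfl
  · rintro ⟨_, ⟨x, rfl⟩, rfl⟩
    choose g h hgh hx using fun ℓ => (x ℓ).2
    refine ⟨fun ℓ => (g ℓ, h ℓ), fun ℓ => ⟨(g ℓ).2, (h ℓ).2⟩, hgh, ?_⟩
    rw [coe_list_prod, List.map_ofFn]
    simp only [← hx]
    rfl

theorem isSubgroup_image_iUnion_pow {S : Set D.carrier} (hS : S⁻¹ = S) :
    D.IsSubgroup ((↑) '' ⋃ n : ℕ, S ^ n) := by
  refine ⟨image_subset_iff.2 fun x _ => x.2, ⟨1, mem_iUnion.2 ⟨0, by simp⟩, rfl⟩, ?_, ?_⟩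
  · rintro _ ⟨x, hx, rfl⟩ _ ⟨y, hy, rfl⟩
    obtain ⟨m, hx⟩ := mem_iUnion.1 hx
    obtain ⟨n, hy⟩ := mem_iUnion.1 hy
    exact ⟨x * y, mem_iUnion.2 ⟨m + n, pow_add S m n ▸ mul_mem_mul hx hy⟩, rfl⟩
  · rintro _ ⟨x, hx, rfl⟩
    obtain ⟨n, hx⟩ := mem_iUnion.1 hx
    refine ⟨x⁻¹, mem_iUnion.2 ⟨n, ?_⟩, rfl⟩
    rwa [← hS, inv_pow, Set.inv_mem_inv]

theorem indexLE_of_typeDiffs_subset (A : Set M) {H : Set M}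
    (hH : ∀ x ∈ D.typeDiffs {f | f.paramsIn A}, (x : M) ∈ H) :
    D.indexLE H (2 ^ (theoryCard L ⊔ #A)) := by
  let tp : M → Set (L.Formula (Fin 1 ⊕ A)) := fun g => {φ | φ.Realize (Sum.elim (fun _ => g) (↑))}
  obtain ⟨S, hSG, hS⟩ := exists_subset_bijOn D.carrier tp
  refine ⟨S, hSG, ?_, fun g hg => ?_⟩
  · calc #S = #(tp '' D.carrier) := mk_congr (hS.equiv tp)
      _ ≤ #(Set (L.Formula (Fin 1 ⊕ A))) := mk_subtype_le _
      _ = 2 ^ #(L.Formula (Fin 1 ⊕ A)) := mk_set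
      _ ≤ 2 ^ (theoryCard L ⊔ #A) := power_le_power_left two_ne_zero (mk_formula_le 1 A)
  · obtain ⟨s, hs, hsg⟩ := hS.image_eq ▸ mem_image_of_mem tp hg
    refine ⟨s, hs, hH _ ⟨⟨s, hSG hs⟩, ⟨g, hg⟩, fun f hf => ?_, rfl⟩⟩
    obtain ⟨φ, hφ⟩ := ParamFormula.exists_formula_of_paramsIn hf
    rw [hφ, hφ]
    exact Set.ext_iff.1 hsg φ

end DefGroup

theorem exists_foldr_suffixes_iff {X : Type*} (op : X → X → X) (e x : X) {n : ℕ}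
    (c : Fin n → X) :
    (∃ s : Fin (n + 1) → X,
      s 0 = x ∧ s (Fin.last n) = e ∧ ∀ ℓ : Fin n, s ℓ.castSucc = op (c ℓ) (s ℓ.succ)) ↔
      x = (List.ofFn c).foldr op e := by
  induction n generalizing x with
  | zero =>
    refine ⟨fun ⟨s, h0, hlast, _⟩ => ?_, fun hx => ⟨fun _ => e, hx.symm, rfl, finZeroElim⟩⟩
    rw [← h0, ← hlast]
    rfl
  | succ n ih =>
    rw [List.ofFn_succ, List.foldr_cons]
    constructor
    · rintro ⟨s, rfl, hlast, hstep⟩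
      have htail := (ih (s 1) (c ∘ Fin.succ)).1
        ⟨s ∘ Fin.succ, rfl, hlast, fun ℓ => by
          simp only [Function.comp_apply, Fin.succ_castSucc]
          exact hstep ℓ.succ⟩
      exact (hstep 0).trans (congrArg _ htail)
    · rintro rfl
      obtain ⟨s, hs0, hlast, hstep⟩ := (ih _ (c ∘ Fin.succ)).2 rfl
      refine ⟨Fin.cons (op (c 0) ((List.ofFn (c ∘ Fin.succ)).foldr op e)) s, rfl, hlast,
        Fin.cases ?_ fun ℓ => ?_⟩
      · simp [← hs0]
      · simpa [← Fin.succ_castSucc] using hstep ℓ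

/-- Witnesses for an element `∏_{ℓ < n} d_{2ℓ}⁻¹ d_{2ℓ+1}` of `q^n`: `left ℓ` and `right ℓ` stand
for `d_{2ℓ}` and `d_{2ℓ+1}`, `invLeft ℓ` for `d_{2ℓ}⁻¹`, `factor ℓ` for `d_{2ℓ}⁻¹ d_{2ℓ+1}`, and
`suffix i` for the product of the factors with index `≥ i`. -/
inductive QVar (n : ℕ) : Type
  | left (ℓ : Fin n)
  | right (ℓ : Fin n)
  | invLeft (ℓ : Fin n)
  | factor (ℓ : Fin n)
  | suffix (i : Fin (n + 1))

instance (n : ℕ) : Finite (QVar n) :=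
  Finite.of_surjective
    (Sum.elim (Sum.elim .left (Sum.elim .right (Sum.elim .invLeft .factor))) .suffix :
      (Fin n ⊕ Fin n ⊕ Fin n ⊕ Fin n) ⊕ Fin (n + 1) → QVar n)
    (by rintro (ℓ | ℓ | ℓ | ℓ | i) <;> simp)

namespace DefGroup

variable (D : DefGroup L M)

noncomputable def mulFormula : ParamFormula L M 3 := D.mul_definable.choose

noncomputable def invFormula : ParamFormula L M 2 := D.inv_definable.choose

noncomputable def oneFormula : ParamFormula L M 1 := D.one_definable.choose

theorem realize_mulFormula (v : Fin 3 → M) :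
    D.mulFormula.Realize v ↔ D.mul (v 0) (v 1) = v 2 := by
  conv_lhs => rw [show v = ![v 0, v 1, v 2] by ext i; fin_cases i <;> rfl]
  exact D.mul_definable.choose_spec.2 _ _ _

theorem realize_invFormula (v : Fin 2 → M) : D.invFormula.Realize v ↔ D.inv (v 0) = v 1 := by
  conv_lhs => rw [show v = ![v 0, v 1] by ext i; fin_cases i <;> rfl]
  exact D.inv_definable.choose_spec.2 _ _

theorem realize_oneFormula (v : Fin 1 → M) : D.oneFormula.Realize v ↔ v 0 = D.one := by
  conv_lhs => rw [show v = ![v 0] by ext i; fin_cases i; rfl]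
  exact D.one_definable.choose_spec.2 _

theorem paramsIn_mulFormula : D.mulFormula.paramsIn D.AStar := D.mul_definable.choose_spec.1

theorem paramsIn_invFormula : D.invFormula.paramsIn D.AStar := D.inv_definable.choose_spec.1

theorem paramsIn_oneFormula : D.oneFormula.paramsIn D.AStar := D.one_definable.choose_spec.1

open QVar in
noncomputable def qConditions (Γ : Set (ParamFormula L M 1)) (n : ℕ) :
    Set (PFormula L M (Fin 1 ⊕ QVar n)) :=
  {PFormula.eq (.inl 0) (.inr (suffix 0)), D.oneFormula.atVars ![.inr (suffix (Fin.last n))]} ∪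
  ⋃ ℓ : Fin n,
    {D.invFormula.atVars ![.inr (left ℓ), .inr (invLeft ℓ)],
      D.mulFormula.atVars ![.inr (invLeft ℓ), .inr (right ℓ), .inr (factor ℓ)],
      D.mulFormula.atVars ![.inr (factor ℓ), .inr (suffix ℓ.succ), .inr (suffix ℓ.castSucc)]} ∪
    (fun f => f.atVars ![.inr (left ℓ)]) '' D.pStar ∪
    (fun f => f.atVars ![.inr (right ℓ)]) '' D.pStar ∪
    (fun f => (f.atVars ![.inr (left ℓ)]).iff (f.atVars ![.inr (right ℓ)])) '' Γ

variable {D} {Γ : Set (ParamFormula L M 1)} {n : ℕ}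

open QVar in
theorem realize_qConditions {c : M} {w : QVar n → M} :
    (∀ ψ ∈ D.qConditions Γ n, ψ.Realize (Sum.elim (fun _ => c) w)) ↔
      c = w (suffix 0) ∧ w (suffix (Fin.last n)) = D.one ∧
      ∀ ℓ, D.inv (w (left ℓ)) = w (invLeft ℓ) ∧
        D.mul (w (invLeft ℓ)) (w (right ℓ)) = w (factor ℓ) ∧
        D.mul (w (factor ℓ)) (w (suffix ℓ.succ)) = w (suffix ℓ.castSucc) ∧
        w (left ℓ) ∈ D.carrier ∧ w (right ℓ) ∈ D.carrier ∧
        ∀ f ∈ Γ, (f.Realize fun _ => w (left ℓ)) ↔ f.Realize fun _ => w (right ℓ) := by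
  simp [qConditions, or_imp, forall_and, forall_comm (α := PFormula L M (Fin 1 ⊕ QVar n)),
    realize_mulFormula, realize_invFormula, realize_oneFormula, carrier, realizeSet,
    Function.comp_def, and_assoc]

open QVar in
theorem mem_qSet_iff {c : M} :
    c ∈ D.qSet Γ n ↔
      ∃ w : QVar n → M, ∀ ψ ∈ D.qConditions Γ n, ψ.Realize (Sum.elim (fun _ => c) w) := by
  simp only [realize_qConditions]
  constructor
  · rintro ⟨d, hd, hΓ, hc⟩
    obtain ⟨s, hs0, hlast, hstep⟩ := (exists_foldr_suffixes_iff _ _ _ _).2 hc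
    let w : QVar n → M
      | left ℓ => (d ℓ).1
      | right ℓ => (d ℓ).2
      | invLeft ℓ => D.inv (d ℓ).1
      | factor ℓ => D.mul (D.inv (d ℓ).1) (d ℓ).2
      | suffix i => s i
    exact ⟨w, hs0.symm, hlast, fun ℓ => ⟨rfl, rfl, (hstep ℓ).symm, (hd ℓ).1, (hd ℓ).2, hΓ ℓ⟩⟩
  · rintro ⟨w, hc, hlast, h⟩
    refine ⟨fun ℓ => (w (left ℓ), w (right ℓ)), fun ℓ => ⟨(h ℓ).2.2.2.1, (h ℓ).2.2.2.2.1⟩,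
      fun ℓ => (h ℓ).2.2.2.2.2, (exists_foldr_suffixes_iff _ _ _ _).1 ⟨w ∘ suffix, hc.symm, hlast,
        fun ℓ => ?_⟩⟩
    simp only [Function.comp_apply, (h ℓ).1, (h ℓ).2.1, (h ℓ).2.2.1]

theorem paramsIn_qConditions {B : Set M} (hΓ : ∀ f ∈ Γ, f.paramsIn B) :
    ∀ ψ ∈ D.qConditions Γ n, ψ.paramsIn (D.AStar ∪ B) := by
  have hA {k : ℕ} {f : ParamFormula L M k} (hf : f.paramsIn D.AStar) :
      f.paramsIn (D.AStar ∪ B) := fun i => Or.inl (hf i)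
  have hB {f : ParamFormula L M 1} (hf : f.paramsIn B) : f.paramsIn (D.AStar ∪ B) :=
    fun i => Or.inr (hf i)
  simp only [qConditions, mem_union, mem_insert_iff, mem_singleton_iff, mem_iUnion, mem_image]
  rintro ψ ((rfl | rfl) | ⟨ℓ, (((rfl | rfl | rfl) | ⟨f, hf, rfl⟩) | ⟨f, hf, rfl⟩) | ⟨f, hf, rfl⟩⟩)
  · exact PFormula.paramsIn_eq _ _ _
  · exact ParamFormula.paramsIn_atVars (hA D.paramsIn_oneFormula)
  · exact ParamFormula.paramsIn_atVars (hA D.paramsIn_invFormula)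
  · exact ParamFormula.paramsIn_atVars (hA D.paramsIn_mulFormula)
  · exact ParamFormula.paramsIn_atVars (hA D.paramsIn_mulFormula)
  · exact ParamFormula.paramsIn_atVars (hA (D.pStar_over f hf))
  · exact ParamFormula.paramsIn_atVars (hA (D.pStar_over f hf))
  · exact PFormula.paramsIn_iff (ParamFormula.paramsIn_atVars (hB (hΓ f hf)))
      (ParamFormula.paramsIn_atVars (hB (hΓ f hf)))

theorem qSet_eq_realizeSet_exType {κ : Cardinal.{u}} (hsat : Saturated L M κ) (hκ : ℵ₀ < κ)
    {B : Set M} (hB : #(D.AStar ∪ B : Set M) < κ) (hΓ : ∀ f ∈ Γ, f.paramsIn B) :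
    D.qSet Γ n = realizeSet (exType (D.qConditions Γ n)) := by
  rw [hsat.realizeSet_exType hκ hB (paramsIn_qConditions hΓ)]
  ext c
  exact mem_qSet_iff

end DefGroup

theorem unionTypeDefinable_iUnion {κ : Cardinal.{u}} (hκ : ℵ₀ < κ) {B : Set M} (hB : #B < κ)
    {P : ℕ → Set (ParamFormula L M 1)} (hP : ∀ n, IsTypeOver (P n) B) :
    UnionTypeDefinable L (⋃ n, realizeSet (P n)) κ :=
  ⟨B, hB, ULift ℕ, by simpa using hκ, fun n => P n.down, fun n => hP n.down,
    (Equiv.ulift.surjective.iUnion_comp fun n => realizeSet (P n)).symm⟩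

/-- Observation 1.7(4) of [Sh:886]: for any `ā ∈ ^α𝔠` with `α < κ̄`, the set
`⋃_{k<ω} q^k_{ā}(𝔠)` is a union-type-definable subgroup of `G` of bounded index, in fact of
index at most `2^{|T|+|α|}`. -/
theorem observation_h12_4
    {L : FirstOrder.Language.{u, u}} {M : Type u} [L.Structure M]
    (κbar : Cardinal.{u}) (hκinacc : κbar.IsInaccessible) (hκT : theoryCard L < κbar)
    (hκsat : Saturated L M κbar)
    (D : DefGroup L M) (hAκ : #(D.AStar) < κbar)
    (α : Type u) (hα : #α < κbar) (abar : α → M) :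
    D.IsSubgroup (⋃ k : ℕ, D.qTupleSet abar k) ∧
    UnionTypeDefinable L (⋃ k : ℕ, D.qTupleSet abar k) κbar ∧
    D.indexLT (⋃ k : ℕ, D.qTupleSet abar k) κbar ∧
    D.indexLE (⋃ k : ℕ, D.qTupleSet abar k) (2 ^ (theoryCard L ⊔ #α)) := by
  set Γ : Set (ParamFormula L M 1) := {f | f.paramsIn (range abar)}
  have hA : #(range abar) < κbar := mk_range_le.trans_lt hα
  have hB : #(D.AStar ∪ range abar : Set M) < κbar :=
    (mk_union_le _ _).trans_lt (add_lt_of_lt hκinacc.aleph0_lt.le hAκ hA)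
  have hX : ⋃ k, D.qTupleSet abar k = (↑) '' ⋃ k : ℕ, D.typeDiffs Γ ^ k := by
    simp only [DefGroup.qTupleSet, DefGroup.qSet_eq_image_pow, image_iUnion, Γ]
  obtain ⟨S, hSG, hS, hcover⟩ := D.indexLE_of_typeDiffs_subset (range abar)
    (H := ⋃ k, D.qTupleSet abar k) fun x hx => hX ▸ ⟨x, mem_iUnion.2 ⟨1, by rwa [pow_one]⟩, rfl⟩
  refine ⟨hX ▸ D.isSubgroup_image_iUnion_pow (D.inv_typeDiffs Γ), ?_,
    ⟨S, hSG, hS.trans_lt (hκinacc.isStrongPrelimit (max_lt hκT hA)), hcover⟩,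
    ⟨S, hSG, hS.trans (power_le_power_left two_ne_zero (sup_le_sup_left mk_range_le _)), hcover⟩⟩
  have hq (k : ℕ) : D.qTupleSet abar k = realizeSet (exType (D.qConditions Γ k)) :=
    DefGroup.qSet_eq_realizeSet_exType hκsat hκinacc.aleph0_lt hB fun _ hf => hf
  simp only [hq]
  exact unionTypeDefinable_iUnion hκinacc.aleph0_lt hB fun _ =>
    isTypeOver_exType (DefGroup.paramsIn_qConditions fun _ hf => hf)

end Paper886
end

section
/- For every set B ⊆ 𝔠 (of cardinality < κ̄): q_B is a ⊆-maximal element of R_B; moreover G_B = ⋂{G_q : q ∈ R_B} = ⋂{G_q : q ∈ R_B and q is countable}, and G_B is the ⊆-minimal element of {G_q : q ∈ R_B}. Also q_B = ⋃{q_{b̄} : b̄ ∈ ^{ω≥}B} = ⋃{q ∈ R_B : q countable}. -/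
open FirstOrder Cardinal Set

universe u

namespace Paper886

variable {L : FirstOrder.Language.{u, u}} {M : Type u} [L.Structure M]

/-!
`G_{q_B}` is the intersection of the groups `G_q`, `q ∈ R_B`. Each `G_q` is cut out of `G` by a
set of `B`-definable sets, so there are fewer than `κ̄` of them, and since `κ̄` is a regular
strong limit an intersection of fewer than `κ̄` subgroups of index `< κ̄` has index `< κ̄`; hence
`q_B ∈ R_B`, and everything about `G_B` follows.

For the countable members: if `q ∈ R_B` and `φ ∈ q`, then `G_q` is closed under products and
inverses and `G_q ⊆ φ(𝔠)`, so by saturation (compactness) already finitely many formulas of `q`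
force `φ` on products and inverses. Closing `{φ}` under these finite sets of witnesses `ω` times
gives a countable `q' ⊆ q` containing `φ` with `G_{q'}` a subgroup; as `G_q ⊆ G_{q'}`, it has
small index too, so `q' ∈ R_B`.
-/

theorem ParamFormula.definable_setOf_realize {n : ℕ} (f : ParamFormula L M n) {A : Set M}
    (hf : f.paramsIn A) : A.Definable L {v | f.Realize v} := by
  rw [Set.definable_iff_exists_formula_sum]
  refine ⟨f.toFormula.relabel (Sum.elim Sum.inr fun i => Sum.inl ⟨f.params i, hf i⟩), ?_⟩
  ext v
  simp only [Set.mem_ofPred_eq, ParamFormula.Realize, Language.Formula.realize_relabel]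
  congr! 1
  funext i
  rcases i with i | i <;> rfl

theorem Set.Definable.exists_paramFormula {n : ℕ} {A : Set M} {s : Set (Fin n → M)}
    (hs : A.Definable L s) : ∃ f : ParamFormula L M n, f.paramsIn A ∧ s = {v | f.Realize v} := by
  obtain ⟨A₀, hA₀, hs⟩ := Set.definable_iff_finitely_definable.1 hs
  obtain ⟨φ, rfl⟩ := Set.definable_iff_exists_formula_sum.1 hs
  let e := Fintype.equivFin (A₀ : Set M)
  refine ⟨⟨_, φ.relabel (Sum.elim (Sum.inr ∘ e) Sum.inl), fun i => (e.symm i).1⟩,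
    fun i => hA₀ (e.symm i).2, ?_⟩
  ext v
  simp only [Set.mem_ofPred_eq, ParamFormula.Realize, Language.Formula.realize_relabel]
  congr! 1
  funext i
  rcases i with a | i <;> simp

section Definable₁

variable {A : Set M}

theorem ParamFormula.definable₁_setOf_realize (f : ParamFormula L M 1) (hf : f.paramsIn A) :
    A.Definable₁ L {a | f.Realize fun _ => a} := by
  unfold Set.Definable₁
  convert f.definable_setOf_realize hf using 1
  ext v
  rw [Set.mem_ofPred_eq, Set.mem_ofPred_eq, Set.mem_ofPred_eq, eq_const_of_subsingleton v 0]
  rfl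

theorem Set.Definable₁.exists_paramFormula {X : Set M} (hX : A.Definable₁ L X) :
    ∃ f : ParamFormula L M 1, f.paramsIn A ∧ ∀ a, f.Realize (fun _ => a) ↔ a ∈ X := by
  obtain ⟨f, hfA, hf⟩ := Set.Definable.exists_paramFormula hX
  exact ⟨f, hfA, fun a => (Set.ext_iff.1 hf fun _ => a).symm⟩

theorem definable₁_realizeSet {p : Set (ParamFormula L M 1)} (hp : IsTypeOver p A)
    (hfin : p.Finite) : A.Definable₁ L (realizeSet p) := by
  have := hfin.to_subtype
  unfold Set.Definable₁
  convert Set.definable_iInter_of_finite fun f : p => f.1.definable_setOf_realize (hp f.1 f.2)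
    using 1
  ext v
  simp only [realizeSet, Set.mem_ofPred_eq, Set.mem_iInter, Subtype.forall]
  rw [eq_const_of_subsingleton v 0]
  rfl

theorem _root_.Set.Definable₁.preimage {ν : M → M}
    (hν : A.DefinableFun L fun v : Fin 1 → M => ν (v 0)) {X : Set M} (hX : A.Definable₁ L X) :
    A.Definable₁ L (ν ⁻¹' X) :=
  hX.preimage_map (F := fun v _ => ν (v 0)) fun _ => hν

theorem _root_.Set.Definable₁.preimage_apply_left {μ : M → M → M}
    (hμ : A.DefinableFun L fun v : Fin 2 → M => μ (v 0) (v 1)) {X : Set M}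
    (hX : A.Definable₁ L X) (a : M) : (insert a A).Definable₁ L (μ a ⁻¹' X) := by
  refine (hX.mono (Set.subset_insert a A)).preimage_map (F := fun v _ => μ a (v 0)) fun _ => ?_
  have hpair : (insert a A).DefinableMap L fun v : Fin 1 → M => ![a, v 0] := by
    intro i
    fin_cases i
    · exact Language.definableFun_const L _ (Set.mem_insert a A)
    · exact Set.DefinableFun.proj L
  exact Set.DefinableFun.comp hpair (hμ.mono (Set.subset_insert a A))

theorem _root_.Set.Definable₁.setOf_subset_preimage {μ : M → M → M}
    (hμ : A.DefinableFun L fun v : Fin 2 → M => μ (v 0) (v 1)) {X Y : Set M}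
    (hX : A.Definable₁ L X) (hY : A.Definable₁ L Y) : A.Definable₁ L {x | Y ⊆ μ x ⁻¹' X} := by
  have hpair : A.DefinableMap L fun w : Fin 1 ⊕ Fin 1 → M => ![w (Sum.inl 0), w (Sum.inr 0)] := by
    intro i
    fin_cases i <;> exact Set.DefinableFun.proj L
  have hmem : A.Definable L {w : Fin 1 ⊕ Fin 1 → M | w (Sum.inr 0) ∈ Y} :=
    hY.preimage_comp fun _ => Sum.inr 0
  have hmul : A.Definable L {w : Fin 1 ⊕ Fin 1 → M | μ (w (Sum.inl 0)) (w (Sum.inr 0)) ∈ X} :=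
    hX.preimage_map (F := fun w _ => μ (w (Sum.inl 0)) (w (Sum.inr 0))) fun _ =>
      Set.DefinableFun.comp hpair hμ
  unfold Set.Definable₁
  convert (hmem.himp hmul).forall_of_finite using 1
  ext v
  exact ⟨fun h u hu => h hu, fun h y hy => h (fun _ => y) hy⟩

end Definable₁

section Types

variable {L : FirstOrder.Language.{u, u}} {M : Type u} {A : Set M} {p : Set (ParamFormula L M 1)}

theorem IsTypeOver.subset {q : Set (ParamFormula L M 1)} (hp : IsTypeOver p A) (hq : q ⊆ p) :
    IsTypeOver q A :=
  fun f hf => hp f (hq hf)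

theorem IsTypeOver.mono {B : Set M} (hp : IsTypeOver p A) (hAB : A ⊆ B) : IsTypeOver p B :=
  fun f hf i => hAB (hp f hf i)

end Types

theorem realizeSet_antitone {p q : Set (ParamFormula L M 1)} (h : p ⊆ q) :
    realizeSet q ⊆ realizeSet p :=
  fun _ ha f hf => ha f (h hf)

section Compactness

variable {A : Set M} {κ : Cardinal.{u}} {p : Set (ParamFormula L M 1)}

theorem Saturated.exists_finite_realizeSet_subset_iUnion (hsat : Saturated L M κ) (hA : #A < κ)
    (hp : IsTypeOver p A) {ι : Type*} {X : ι → Set M} (hX : ∀ i, A.Definable₁ L (X i))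
    (h : realizeSet p ⊆ ⋃ i, X i) :
    ∃ p₀ ⊆ p, p₀.Finite ∧ ∃ I : Finset ι, realizeSet p₀ ⊆ ⋃ i ∈ I, X i := by
  classical
  choose ψ hψA hψ using fun i =>
    Set.Definable₁.exists_paramFormula (X := (X i)ᶜ) (hX i).compl
  by_contra! hcon
  have hover : IsTypeOver (p ∪ Set.range ψ) A := by
    rintro f (hf | ⟨i, rfl⟩)
    exacts [hp f hf, hψA i]
  obtain ⟨a, ha⟩ := hsat A hA _ hover fun s hs hfin => by
    obtain ⟨I, -, hI⟩ := Finset.subset_set_image_iff.1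
      (show ↑(hfin.inter_of_left (Set.range ψ)).toFinset ⊆ ψ '' Set.univ by simp)
    obtain ⟨a, ha, haX⟩ := Set.not_subset.1
      (hcon (s ∩ p) Set.inter_subset_right (hfin.inter_of_left p) I)
    refine ⟨a, fun f hf => ?_⟩
    rcases hs hf with hfp | ⟨i, rfl⟩
    · exact ha _ ⟨hf, hfp⟩
    · obtain ⟨j, hj, hji⟩ := Finset.mem_image.1 (show ψ i ∈ I.image ψ by simp [hI, hf])
      rw [← hji, hψ]
      exact fun haj => haX (Set.mem_biUnion hj haj)
  obtain ⟨i, hi⟩ := Set.mem_iUnion.1 (h (realizeSet_antitone Set.subset_union_left ha))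
  exact (hψ i a).1 (ha _ (Or.inr ⟨i, rfl⟩)) hi

theorem Saturated.exists_finite_realizeSet_subset (hsat : Saturated L M κ) (hA : #A < κ)
    (hp : IsTypeOver p A) {X : Set M} (hX : A.Definable₁ L X) (h : realizeSet p ⊆ X) :
    ∃ p₀ ⊆ p, p₀.Finite ∧ realizeSet p₀ ⊆ X := by
  obtain ⟨p₀, hp₀, hfin, I, hI⟩ := hsat.exists_finite_realizeSet_subset_iUnion hA hp
    (fun _ : Unit => hX) (h.trans (Set.subset_iUnion (fun _ : Unit => X) ()))
  exact ⟨p₀, hp₀, hfin, hI.trans (Set.iUnion₂_subset fun _ _ => le_rfl)⟩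

/- Compactness is applied twice: over `A ∪ {a}` it gives, for each `a ∈ p(𝔠)`, a finite `F ⊆ p`
with `μ a (F(𝔠)) ⊆ X`; over `A` it then covers `p(𝔠)` by finitely many of the definable sets
`{x | μ x (F(𝔠)) ⊆ X}`. -/
theorem Saturated.exists_finite_image2_subset (hsat : Saturated L M κ) (hκ : ℵ₀ ≤ κ)
    (hA : #A < κ) (hp : IsTypeOver p A) {μ : M → M → M}
    (hμ : A.DefinableFun L fun v : Fin 2 → M => μ (v 0) (v 1)) {X : Set M}
    (hX : A.Definable₁ L X) (h : Set.image2 μ (realizeSet p) (realizeSet p) ⊆ X) :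
    ∃ p₀ ⊆ p, p₀.Finite ∧ Set.image2 μ (realizeSet p₀) (realizeSet p₀) ⊆ X := by
  let Z (F : {F : Finset (ParamFormula L M 1) // ↑F ⊆ p}) : Set M :=
    {x | realizeSet (F.1 : Set (ParamFormula L M 1)) ⊆ μ x ⁻¹' X}
  have hZ : ∀ F, A.Definable₁ L (Z F) := fun F =>
    hX.setOf_subset_preimage hμ (definable₁_realizeSet (hp.subset F.2) F.1.finite_toSet)
  have hcover : realizeSet p ⊆ ⋃ F, Z F := by
    intro a ha
    have haA : #(insert a A : Set M) < κ :=
      Cardinal.mk_insert_le.trans_lt (Cardinal.add_lt_of_lt hκ hA (one_lt_aleph0.trans_le hκ))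
    obtain ⟨F, hFp, hFfin, hF⟩ := hsat.exists_finite_realizeSet_subset (X := μ a ⁻¹' X)
      haA (hp.mono (Set.subset_insert a A)) (hX.preimage_apply_left hμ a)
      fun y hy => h (Set.mem_image2_of_mem ha hy)
    refine Set.mem_iUnion.2 ⟨⟨hFfin.toFinset, by rwa [Set.Finite.coe_toFinset]⟩, ?_⟩
    simpa only [Z, Set.mem_ofPred_eq, Set.Finite.coe_toFinset] using hF
  obtain ⟨p₁, hp₁, hfin, I, hI⟩ := hsat.exists_finite_realizeSet_subset_iUnion hA hp hZ hcover
  let p₂ : Set (ParamFormula L M 1) := ⋃ F ∈ I, (F.1 : Set (ParamFormula L M 1))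
  have hp₂ : p₂ ⊆ p := Set.iUnion₂_subset fun F _ => F.2
  have hp₂fin : p₂.Finite := I.finite_toSet.biUnion fun F _ => F.1.finite_toSet
  refine ⟨p₁ ∪ p₂, Set.union_subset hp₁ hp₂, hfin.union hp₂fin,
    Set.image2_subset_iff.2 fun x hx y hy => ?_⟩
  obtain ⟨F, hF, hxF⟩ := Set.mem_iUnion₂.1 (hI (realizeSet_antitone Set.subset_union_left hx))
  have hFp₂ : (F.1 : Set (ParamFormula L M 1)) ⊆ p₁ ∪ p₂ :=
    fun f hf => Or.inr (Set.mem_iUnion₂.2 ⟨F, hF, hf⟩)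
  exact hxF (realizeSet_antitone hFp₂ hy)

end Compactness

theorem _root_.Cardinal.prod_lt_of_isRegular_of_isStrongLimit {κ : Cardinal.{u}}
    (hreg : κ.IsRegular) (hsl : κ.IsStrongLimit) {ι : Type u} (hι : #ι < κ)
    {c : ι → Cardinal.{u}} (hc : ∀ i, c i < κ) : Cardinal.prod c < κ := by
  have hsup : (⨆ i, c i) < κ := Cardinal.iSup_lt_of_lt_cof_ord (by rwa [hreg.cof_ord]) hc
  calc Cardinal.prod c ≤ (⨆ i, c i) ^ #ι := by
        rw [← Cardinal.prod_const']
        exact Cardinal.prod_le_prod _ _ fun i => le_ciSup Cardinal.bddAbove_of_small i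
    _ ≤ (2 ^ ⨆ i, c i) ^ #ι := Cardinal.power_le_power_right (Cardinal.cantor _).le
    _ = 2 ^ ((⨆ i, c i) * #ι) := by rw [← Cardinal.power_mul]
    _ < κ := hsl.isStrongPrelimit (Cardinal.mul_lt_of_lt hsl.aleph0_le hsup hι)

theorem card_setOf_definable₁_lt {κ : Cardinal.{u}} (hT : theoryCard L < κ) {B : Set M}
    (hB : #B < κ) : #{X : Set M | B.Definable₁ L X} < κ := by
  have hℵ : ℵ₀ < κ := (le_max_left _ _).trans_lt hT
  have hL : L.card < κ := (le_max_right _ _).trans_lt hT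
  have hrange : {X : Set M | B.Definable₁ L X} ⊆
      Set.range fun φ : L[[B]].Formula (Fin 1) => {a | φ.Realize fun _ => a} :=
    fun X ⟨φ, hφ⟩ => ⟨φ, Set.ext fun a => (Set.ext_iff.1 hφ fun _ => a).symm⟩
  calc #{X : Set M | B.Definable₁ L X}
      ≤ #(L[[B]].Formula (Fin 1)) := (Cardinal.mk_le_mk_of_subset hrange).trans Cardinal.mk_range_le
    _ ≤ #(Σ n, L[[B]].BoundedFormula (Fin 1) n) :=
        Cardinal.mk_le_of_injective (f := Sigma.mk 0) sigma_mk_injective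
    _ ≤ max ℵ₀ (Cardinal.lift #(Fin 1) + Cardinal.lift L[[B]].card) :=
        Language.BoundedFormula.card_le
    _ < κ := by
        refine max_lt hℵ ?_
        simp only [Language.card_withConstants, Cardinal.mk_fintype, Fintype.card_fin,
          Nat.cast_one, Cardinal.lift_one, Cardinal.lift_id, Cardinal.lift_uzero]
        exact Cardinal.add_lt_of_lt hℵ.le (Cardinal.one_lt_aleph0.trans hℵ)
          (Cardinal.add_lt_of_lt hℵ.le hL hB)

theorem exists_countable_superset_closed {α : Type*} {s T : Set α} (c : α → Set α)
    (hs : s.Countable) (hsT : s ⊆ T) (hc : ∀ a ∈ T, (c a).Countable ∧ c a ⊆ T) :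
    ∃ t, s ⊆ t ∧ t ⊆ T ∧ t.Countable ∧ ∀ a ∈ t, c a ⊆ t := by
  let step (S : Set α) : Set α := S ∪ ⋃ a ∈ S, c a
  have hstep : ∀ n, step^[n] s ⊆ T ∧ (step^[n] s).Countable := by
    intro n
    induction n with
    | zero => exact ⟨hsT, hs⟩
    | succ n ih =>
      rw [Function.iterate_succ_apply']
      exact ⟨Set.union_subset ih.1 (Set.iUnion₂_subset fun a ha => (hc a (ih.1 ha)).2),
        ih.2.union (ih.2.biUnion fun a ha => (hc a (ih.1 ha)).1)⟩
  refine ⟨⋃ n, step^[n] s, Set.subset_iUnion (fun n => step^[n] s) 0,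
    Set.iUnion_subset fun n => (hstep n).1, Set.countable_iUnion fun n => (hstep n).2,
    fun a ha => ?_⟩
  obtain ⟨n, hn⟩ := Set.mem_iUnion.1 ha
  refine subset_trans ?_ (Set.subset_iUnion (fun n => step^[n] s) (n + 1))
  rw [Function.iterate_succ_apply']
  exact Set.subset_union_of_subset_right (Set.subset_biUnion_of_mem hn) _

namespace DefGroup

variable (D : DefGroup L M) {κ : Cardinal.{u}}

theorem definableFun_mul : D.AStar.DefinableFun L fun v : Fin 2 → M => D.mul (v 0) (v 1) := by
  obtain ⟨φ, hφA, hφ⟩ := D.mul_definable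
  have hgraph : Function.tupleGraph (fun v : Fin 2 → M => D.mul (v 0) (v 1)) =
      (· ∘ ![some 0, some 1, none]) ⁻¹' {v | φ.Realize v} := by
    ext w
    have hw : w ∘ ![some 0, some 1, none] = ![w (some 0), w (some 1), w none] := by
      ext i; fin_cases i <;> rfl
    simp [Function.tupleGraph, hw, hφ]
  rw [Set.DefinableFun, hgraph]
  exact (φ.definable_setOf_realize hφA).preimage_comp _

theorem definableFun_inv : D.AStar.DefinableFun L fun v : Fin 1 → M => D.inv (v 0) := by
  obtain ⟨φ, hφA, hφ⟩ := D.inv_definable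
  have hgraph : Function.tupleGraph (fun v : Fin 1 → M => D.inv (v 0)) =
      (· ∘ ![some 0, none]) ⁻¹' {v | φ.Realize v} := by
    ext w
    have hw : w ∘ ![some 0, none] = ![w (some 0), w none] := by
      ext i; fin_cases i <;> rfl
    simp [Function.tupleGraph, hw, hφ]
  rw [Set.DefinableFun, hgraph]
  exact (φ.definable_setOf_realize hφA).preimage_comp _

abbrev Elem : Type u := D.carrier

instance : Mul D.Elem := ⟨fun a b => ⟨D.mul a b, D.mul_mem' _ a.2 _ b.2⟩⟩
instance : One D.Elem := ⟨⟨D.one, D.one_mem'⟩⟩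
instance : Inv D.Elem := ⟨fun a => ⟨D.inv a, D.inv_mem' _ a.2⟩⟩

instance : Group D.Elem :=
  Group.ofLeftAxioms
    (fun a b c => Subtype.ext (D.mul_assoc' _ a.2 _ b.2 _ c.2))
    (fun a => Subtype.ext (D.one_mul' _ a.2))
    (fun a => Subtype.ext (D.inv_mul' _ a.2))

variable {D}

def toSubgroup {H : Set M} (hH : D.IsSubgroup H) : Subgroup D.Elem where
  carrier := {a : D.Elem | (a : M) ∈ H}
  one_mem' := hH.2.1
  mul_mem' {a b} ha hb := hH.2.2.1 a ha b hb
  inv_mem' {a} ha := hH.2.2.2 a ha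

theorem isSubgroup_iInter {ι : Type*} [Nonempty ι] {H : ι → Set M}
    (hH : ∀ i, D.IsSubgroup (H i)) : D.IsSubgroup (⋂ i, H i) := by
  refine ⟨(Set.iInter_subset _ (Classical.arbitrary ι)).trans (hH _).1,
    Set.mem_iInter.2 fun i => (hH i).2.1, fun x hx y hy => ?_, fun x hx => ?_⟩
  · exact Set.mem_iInter.2 fun i =>
      (hH i).2.2.1 x (Set.mem_iInter.1 hx i) y (Set.mem_iInter.1 hy i)
  · exact Set.mem_iInter.2 fun i => (hH i).2.2.2 x (Set.mem_iInter.1 hx i)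

theorem card_quotient_lt_of_indexLT {H : Set M} (hH : D.IsSubgroup H) (h : D.indexLT H κ) :
    #(D.Elem ⧸ toSubgroup hH) < κ := by
  obtain ⟨S, hSG, hSκ, hS⟩ := h
  refine lt_of_le_of_lt (Cardinal.mk_le_of_surjective
    (f := fun s : S => (QuotientGroup.mk ⟨s, hSG s.2⟩ : D.Elem ⧸ toSubgroup hH)) ?_) hSκ
  refine fun c => Quotient.inductionOn' c fun g => ?_
  obtain ⟨s, hs, hsg⟩ := hS g g.2
  exact ⟨⟨s, hs⟩, QuotientGroup.eq.2 hsg⟩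

theorem indexLT_of_card_quotient_lt {H : Set M} {N : Subgroup D.Elem}
    (hN : #(D.Elem ⧸ N) < κ) (hNH : ∀ a ∈ N, ↑a ∈ H) : D.indexLT H κ := by
  refine ⟨Set.range fun c : D.Elem ⧸ N => (c.out : M), ?_, Cardinal.mk_range_le.trans_lt hN, ?_⟩
  · rintro _ ⟨c, rfl⟩
    exact c.out.2
  · intro g hg
    let c : D.Elem ⧸ N := QuotientGroup.mk ⟨g, hg⟩
    exact ⟨_, ⟨c, rfl⟩, hNH (c.out⁻¹ * ⟨g, hg⟩) (QuotientGroup.eq.1 (QuotientGroup.out_eq' c))⟩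

theorem indexLT_mono {H H' : Set M} (hHH' : H ⊆ H') (h : D.indexLT H κ) : D.indexLT H' κ :=
  let ⟨S, hSG, hSκ, hS⟩ := h
  ⟨S, hSG, hSκ, fun g hg => let ⟨s, hs, hsg⟩ := hS g hg; ⟨s, hs, hHH' hsg⟩⟩

theorem indexLT_iInter (hreg : κ.IsRegular) (hsl : κ.IsStrongLimit) {ι : Type u} (hι : #ι < κ)
    {H : ι → Set M} (hH : ∀ i, D.IsSubgroup (H i)) (hidx : ∀ i, D.indexLT (H i) κ) :
    D.indexLT (⋂ i, H i) κ := by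
  refine indexLT_of_card_quotient_lt (N := ⨅ i, toSubgroup (hH i)) ?_
    fun a ha => Set.mem_iInter.2 fun i => Subgroup.mem_iInf.1 ha i
  refine (Cardinal.mk_le_of_injective (Subgroup.quotientiInfEmbedding _).injective).trans_lt ?_
  rw [Cardinal.mk_pi]
  exact Cardinal.prod_lt_of_isRegular_of_isStrongLimit hreg hsl hι
    fun i => card_quotient_lt_of_indexLT (hH i) (hidx i)

end DefGroup

section RB

variable {D : DefGroup L M} {κ : Cardinal.{u}} {B : Set M} {q : Set (ParamFormula L M 1)}

theorem Gq_antitone {q q' : Set (ParamFormula L M 1)} (h : q ⊆ q') : Gq D q' ⊆ Gq D q :=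
  realizeSet_antitone (Set.union_subset_union_right _ h)

theorem Gq_subset_carrier (q : Set (ParamFormula L M 1)) : Gq D q ⊆ D.carrier :=
  realizeSet_antitone Set.subset_union_left

theorem Gq_sUnion {𝒬 : Set (Set (ParamFormula L M 1))} (h𝒬 : 𝒬.Nonempty) :
    Gq D (⋃₀ 𝒬) = ⋂ q ∈ 𝒬, Gq D q := by
  ext a
  simp only [Gq, realizeSet, Set.mem_iInter, Set.mem_ofPred_eq]
  constructor
  · rintro ha q hq f (hf | hf)
    exacts [ha f (Or.inl hf), ha f (Or.inr ⟨q, hq, hf⟩)]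
  · rintro ha f (hf | ⟨q, hq, hf⟩)
    exacts [ha _ h𝒬.some_mem f (Or.inl hf), ha q hq f (Or.inr hf)]

theorem GB_eq_Gq_qB : GB D κ B = Gq D (qB D κ B) := by
  ext a
  simp only [GB, Gq, realizeSet, DefGroup.carrier, Set.mem_inter_iff, Set.mem_ofPred_eq,
    Set.mem_union]
  constructor
  · rintro ⟨hq, hp⟩ f (hf | hf)
    exacts [hp f hf, hq f hf]
  · exact fun h => ⟨fun f hf => h f (Or.inr hf), fun f hf => h f (Or.inl hf)⟩

theorem empty_mem_RB (hκ : 1 < κ) : (∅ : Set (ParamFormula L M 1)) ∈ RB D κ B := by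
  have hG : Gq D ∅ = D.carrier := by rw [Gq, Set.union_empty]; rfl
  refine ⟨fun f hf => hf.elim, ?_, {D.one}, Set.singleton_subset_iff.2 D.one_mem', ?_, ?_⟩
  · rw [hG]
    exact ⟨subset_rfl, D.one_mem', D.mul_mem', D.inv_mem'⟩
  · rwa [Cardinal.mk_singleton]
  · intro g hg
    rw [hG]
    exact ⟨D.one, rfl, D.mul_mem' _ (D.inv_mem' _ D.one_mem') _ hg⟩

theorem RB_mono {s : Set M} (hsB : s ⊆ B) : RB D κ s ⊆ RB D κ B :=
  fun _ hq => ⟨hq.1.mono hsB, hq.2⟩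

theorem card_Gq_image_RB_lt (hsl : κ.IsStrongLimit) (hT : theoryCard L < κ) (hB : #B < κ) :
    #(Gq D '' RB D κ B) < κ := by
  let setOf_realize (f : ParamFormula L M 1) : Set M := {a | f.Realize fun _ => a}
  have himage : Gq D '' RB D κ B ⊆
      (fun 𝒮 => D.carrier ∩ ⋂₀ 𝒮) '' 𝒫 {X : Set M | B.Definable₁ L X} := by
    rintro _ ⟨q, hq, rfl⟩
    refine ⟨setOf_realize '' q, ?_, ?_⟩
    · rintro _ ⟨f, hf, rfl⟩
      exact f.definable₁_setOf_realize (hq.1 f hf)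
    · ext a
      simp [Gq, realizeSet, DefGroup.carrier, setOf_realize, or_imp, forall_and]
  calc #(Gq D '' RB D κ B) ≤ #(𝒫 {X : Set M | B.Definable₁ L X}) :=
        (Cardinal.mk_le_mk_of_subset himage).trans Cardinal.mk_image_le
    _ < κ := by
        rw [Cardinal.mk_powerset]
        exact hsl.isStrongPrelimit (card_setOf_definable₁_lt hT hB)

theorem Gq_qB (hκ : 1 < κ) : Gq D (qB D κ B) = ⋂ q ∈ RB D κ B, Gq D q :=
  Gq_sUnion ⟨∅, empty_mem_RB hκ⟩

theorem qB_mem_RB (hreg : κ.IsRegular) (hsl : κ.IsStrongLimit) (hT : theoryCard L < κ)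
    (hB : #B < κ) : qB D κ B ∈ RB D κ B := by
  have hκ : 1 < κ := Cardinal.one_lt_aleph0.trans_le hsl.aleph0_le
  have hG : Gq D (qB D κ B) = ⋂ H : Gq D '' RB D κ B, (H : Set M) := by
    rw [Gq_qB hκ, ← Set.sInter_image, Set.sInter_eq_iInter]
  have : Nonempty (Gq D '' RB D κ B) := ⟨_, Set.mem_image_of_mem _ (empty_mem_RB hκ)⟩
  refine ⟨fun f ⟨q, hq, hf⟩ => hq.1 f hf, ?_, ?_⟩
  · rw [hG]
    exact DefGroup.isSubgroup_iInter fun ⟨_, q, hq, hH⟩ => hH ▸ hq.2.1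
  · rw [hG]
    exact DefGroup.indexLT_iInter hreg hsl (card_Gq_image_RB_lt hsl hT hB)
      (fun ⟨_, q, hq, hH⟩ => hH ▸ hq.2.1) fun ⟨_, q, hq, hH⟩ => hH ▸ hq.2.2

theorem exists_finite_subset_forces_inv_mul (hsat : Saturated L M κ) (hκ : ℵ₀ ≤ κ)
    (hA : #D.AStar < κ) (hB : #B < κ) (hq : q ∈ RB D κ B) {g : ParamFormula L M 1}
    (hg : g ∈ q) : ∃ F ⊆ q, F.Finite ∧ ∀ x ∈ Gq D F,
      (g.Realize fun _ => D.inv x) ∧ ∀ y ∈ Gq D F, g.Realize fun _ => D.mul x y := by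
  have hAB : #(D.AStar ∪ B : Set M) < κ :=
    (Cardinal.mk_union_le _ _).trans_lt (Cardinal.add_lt_of_lt hκ hA hB)
  have hover : IsTypeOver (D.pStar ∪ q) (D.AStar ∪ B) := by
    rintro f (hf | hf) i
    exacts [Or.inl (D.pStar_over f hf i), Or.inr (hq.1 f hf i)]
  have hX : (D.AStar ∪ B).Definable₁ L {a | g.Realize fun _ => a} :=
    g.definable₁_setOf_realize fun i => Or.inr (hq.1 g hg i)
  obtain ⟨p₁, hp₁, hfin₁, h₁⟩ := hsat.exists_finite_realizeSet_subset hAB hover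
    (hX.preimage (D.definableFun_inv.mono Set.subset_union_left))
    fun x hx => hq.2.1.2.2.2 x hx g (Or.inr hg)
  obtain ⟨p₂, hp₂, hfin₂, h₂⟩ := hsat.exists_finite_image2_subset hκ hAB hover
    (D.definableFun_mul.mono Set.subset_union_left) hX
    (Set.image2_subset_iff.2 fun x hx y hy => hq.2.1.2.2.1 x hx y hy g (Or.inr hg))
  have hsplit : p₁ ∪ p₂ ⊆ D.pStar ∪ (p₁ ∪ p₂) ∩ q := fun f hf =>
    (Set.union_subset hp₁ hp₂ hf).imp id fun hfq => ⟨hf, hfq⟩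
  have h₁₂ : Gq D ((p₁ ∪ p₂) ∩ q) ⊆ realizeSet p₁ ∩ realizeSet p₂ := fun x hx =>
    ⟨realizeSet_antitone (Set.subset_union_left.trans hsplit) hx,
      realizeSet_antitone (Set.subset_union_right.trans hsplit) hx⟩
  exact ⟨_, Set.inter_subset_right, (hfin₁.union hfin₂).inter_of_left _, fun x hx =>
    ⟨h₁ (h₁₂ hx).1, fun y hy => h₂ (Set.mem_image2_of_mem (h₁₂ hx).2 (h₁₂ hy).2)⟩⟩

theorem exists_countable_mem_RB (hsat : Saturated L M κ) (hκ : ℵ₀ ≤ κ) (hA : #D.AStar < κ)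
    (hB : #B < κ) (hq : q ∈ RB D κ B) {f : ParamFormula L M 1} (hf : f ∈ q) :
    ∃ q' ⊆ q, q'.Countable ∧ f ∈ q' ∧ q' ∈ RB D κ B := by
  choose! F hFq hFfin hF using fun g (hg : g ∈ q) =>
    exists_finite_subset_forces_inv_mul hsat hκ hA hB hq hg
  obtain ⟨q', hfq', hq'q, hq'c, hq'F⟩ := exists_countable_superset_closed F
    (Set.countable_singleton f) (Set.singleton_subset_iff.2 hf)
    fun g hg => ⟨(hFfin g hg).countable, hFq g hg⟩
  have hGq : Gq D q ⊆ Gq D q' := Gq_antitone hq'q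
  refine ⟨q', hq'q, hq'c, hfq' rfl, hq.1.subset hq'q,
    ⟨Gq_subset_carrier _, hGq hq.2.1.2.1, fun x hx y hy => ?_, fun x hx => ?_⟩,
    DefGroup.indexLT_mono hGq hq.2.2⟩
  · rintro g (hg | hg)
    · exact D.mul_mem' x (Gq_subset_carrier _ hx) y (Gq_subset_carrier _ hy) g hg
    · have hsub : Gq D q' ⊆ Gq D (F g) := Gq_antitone (hq'F g hg)
      exact (hF g (hq'q hg) x (hsub hx)).2 y (hsub hy)
  · rintro g (hg | hg)
    · exact D.inv_mem' x (Gq_subset_carrier _ hx) g hg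
    · exact (hF g (hq'q hg) x (Gq_antitone (hq'F g hg) hx)).1

theorem qB_eq_sUnion_countable (hsat : Saturated L M κ) (hκ : ℵ₀ ≤ κ) (hA : #D.AStar < κ)
    (hB : #B < κ) : qB D κ B = ⋃₀ {q ∈ RB D κ B | q.Countable} := by
  refine subset_antisymm ?_ (Set.sUnion_mono fun q hq => hq.1)
  rintro f ⟨q, hq, hf⟩
  obtain ⟨q', -, hq'c, hfq', hq'⟩ := exists_countable_mem_RB hsat hκ hA hB hq hf
  exact ⟨q', ⟨hq', hq'c⟩, hfq'⟩

theorem qB_eq_sUnion_qB_countable (hsat : Saturated L M κ) (hκ : ℵ₀ ≤ κ) (hA : #D.AStar < κ)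
    (hB : #B < κ) :
    qB D κ B = ⋃₀ {p | ∃ s : Set M, s ⊆ B ∧ s.Countable ∧ p = qB D κ s} := by
  refine subset_antisymm ?_ (Set.sUnion_subset fun _ ⟨s, hsB, _, hp⟩ =>
    hp ▸ Set.sUnion_mono (RB_mono hsB))
  rw [qB_eq_sUnion_countable hsat hκ hA hB]
  rintro f ⟨q, ⟨hq, hqc⟩, hf⟩
  let s : Set M := ⋃ g ∈ q, Set.range g.params
  refine ⟨qB D κ s, ⟨s, ?_, ?_, rfl⟩, q, ⟨?_, hq.2⟩, hf⟩
  · exact Set.iUnion₂_subset fun g hg => Set.range_subset_iff.2 (hq.1 g hg)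
  · exact hqc.biUnion fun g _ => Set.countable_range _
  · exact fun g hg i => Set.mem_biUnion hg (Set.mem_range_self i)

theorem GB_eq_biInter (hκ : 1 < κ) : GB D κ B = ⋂ q ∈ RB D κ B, Gq D q := by
  rw [GB_eq_Gq_qB, Gq_qB hκ]

theorem GB_eq_biInter_countable (hsat : Saturated L M κ) (hκ : ℵ₀ ≤ κ) (hA : #D.AStar < κ)
    (hB : #B < κ) : GB D κ B = ⋂ q ∈ {q ∈ RB D κ B | q.Countable}, Gq D q := by
  rw [GB_eq_Gq_qB, qB_eq_sUnion_countable hsat hκ hA hB]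
  exact Gq_sUnion ⟨∅, empty_mem_RB (Cardinal.one_lt_aleph0.trans_le hκ), Set.countable_empty⟩

end RB

/-- Observation 2.3(1)-(3) of [Sh:886]: `q_B` is the union of the `q_{b̄}` for countable
`b̄` from `B` and of the countable members of `R_B`; `q_B` is the `⊆`-maximal member of
`R_B`; and `G_B` is the intersection of the `G_q` for `q ∈ R_B` (equivalently for countable
`q ∈ R_B`) and is the `⊆`-minimal member of `{G_q : q ∈ R_B}`. -/
theorem observation_dt18
    {L : FirstOrder.Language.{u, u}} {M : Type u} [L.Structure M]
    (κbar : Cardinal.{u}) (hκinacc : κbar.IsInaccessible) (hκT : theoryCard L < κbar)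
    (hκsat : Saturated L M κbar)
    (D : DefGroup L M) (hAκ : #(D.AStar) < κbar)
    (B : Set M) (hB : #B < κbar) :
    (qB D κbar B = ⋃₀ {p | ∃ s : Set M, s ⊆ B ∧ s.Countable ∧ p = qB D κbar s}) ∧
    (qB D κbar B = ⋃₀ {q ∈ RB D κbar B | q.Countable}) ∧
    (qB D κbar B ∈ RB D κbar B ∧ ∀ q ∈ RB D κbar B, q ⊆ qB D κbar B) ∧
    (GB D κbar B = ⋂ q ∈ RB D κbar B, Gq D q) ∧
    (GB D κbar B = ⋂ q ∈ {q ∈ RB D κbar B | q.Countable}, Gq D q) ∧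
    ((∃ q ∈ RB D κbar B, GB D κbar B = Gq D q) ∧
      ∀ q ∈ RB D κbar B, GB D κbar B ⊆ Gq D q) := by
  have hℵ : ℵ₀ ≤ κbar := hκinacc.aleph0_lt.le
  have hqB : qB D κbar B ∈ RB D κbar B :=
    qB_mem_RB hκinacc.isRegular hκinacc.isStrongLimit hκT hB
  have hGB : GB D κbar B = ⋂ q ∈ RB D κbar B, Gq D q :=
    GB_eq_biInter (Cardinal.one_lt_aleph0.trans_le hℵ)
  exact ⟨qB_eq_sUnion_qB_countable hκsat hℵ hAκ hB, qB_eq_sUnion_countable hκsat hℵ hAκ hB,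
    ⟨hqB, fun q hq => Set.subset_sUnion_of_mem hq⟩, hGB, GB_eq_biInter_countable hκsat hℵ hAκ hB,
    ⟨qB D κbar B, hqB, GB_eq_Gq_qB⟩, fun q hq => hGB ▸ Set.biInter_subset_of_mem hq⟩

end Paper886
end
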